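/- Suppose 0 ≤ μ < L and: (i) x_0 = 0 and g_* = 0; (ii) for every j ∈ I*_N, (1/(2L))‖g_j‖² + (μL/(2(L−μ)))‖x_* − x_j + (1/L)g_j‖² ≤ f_* − f_j − ⟨g_j, x_* − x_j⟩; (iii) ⟨g_N, g_i − μ x_i⟩ = 0 for all 0 ≤ i ≤ N−1; and (iv) ⟨g_N, x_N⟩ = 0. Then x_* is a global minimizer of V_𝒯 with V_𝒯(x_*) = f_*, and for every y ∈ span{g_0 − μ x_0, …, g_{N−1} − μ x_{N−1}} one has V_𝒯(y) ≥ f_N + (μ/2)‖y − x_N‖² ≥ f_N; in particular inf over that span of V_𝒯(y) − f_* is at least f_N − f_*. -/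

import Mathlib

open scoped RealInnerProductSpace BigOperators

/-- The auxiliary quadratic function `v_T(y, α)` from the strongly-convex extension
construction. -/
noncomputable def vT {d : ℕ} {I : Type*} [Fintype I] (L μ : ℝ)
    (x g : I → EuclideanSpace ℝ (Fin d)) (f : I → ℝ)
    (y : EuclideanSpace ℝ (Fin d)) (α : I → ℝ) : ℝ :=
  L / 2 * ‖y‖ ^ 2
    - (L - μ) / 2 * ‖y - (1 / (L - μ)) • ∑ i, α i • (g i - μ • x i)‖ ^ 2
    + ∑ i, α i * (f i + 1 / (2 * (L - μ)) * ‖g i - L • x i‖ ^ 2 - L / 2 * ‖x i‖ ^ 2)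

/-- The strongly-convex extension `V_T(y) = max_{α ∈ Δ_I} v_T(y, α)`. -/
noncomputable def VT {d : ℕ} {I : Type*} [Fintype I] (L μ : ℝ)
    (x g : I → EuclideanSpace ℝ (Fin d)) (f : I → ℝ)
    (y : EuclideanSpace ℝ (Fin d)) : ℝ :=
  sSup (vT L μ x g f y '' stdSimplex ℝ I)

/-
Evaluated at a vertex `α = eᵢ` of the simplex, `v_T(y, eᵢ)` is the quadratic lower model
`fᵢ + ⟪gᵢ, y - xᵢ⟫ + (μ/2)‖y - xᵢ‖²`, so `V_T` dominates all of them. Since `g_* = 0`, the model at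
`*` gives `V_T ≥ f_*`; on the span, which is orthogonal to `g_N` by (iii), the model at `N` together
with (iv) gives `f_N + (μ/2)‖y - x_N‖²`. Conversely, for `α` in the simplex,
`v_T(y, α) = ∑ αᵢ qᵢ(y) - ‖μ y + ∑ αᵢ (gᵢ - μ xᵢ)‖² / (2(L - μ))`, where `qᵢ(y)` is the right-hand
side of the `F_{μ,L}`-interpolation inequality `f(y) ≥ qᵢ(y)` at a minimizer `y`; hypothesis (ii)
says `qᵢ(x_*) ≤ f_*` for every `i`, hence `V_T(x_*) ≤ f_*`.
-/

noncomputable def interpolationBound {E I : Type*} [NormedAddCommGroup E] [InnerProductSpace ℝ E]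
    (L μ : ℝ) (x g : I → E) (f : I → ℝ) (i : I) (y : E) : ℝ :=
  f i + ⟪g i, y - x i⟫ + 1 / (2 * L) * ‖g i‖ ^ 2
    + μ * L / (2 * (L - μ)) * ‖y - x i + (1 / L) • g i‖ ^ 2

lemma interpolationBound_eq {E I : Type*} [NormedAddCommGroup E] [InnerProductSpace ℝ E]
    {L μ : ℝ} (hL : L ≠ 0) (hLμ : L - μ ≠ 0) (x g : I → E) (f : I → ℝ) (i : I) (y : E) :
    interpolationBound L μ x g f i y
      = μ * L / (2 * (L - μ)) * ‖y‖ ^ 2 + L / (L - μ) * ⟪y, g i - μ • x i⟫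
        + (f i + 1 / (2 * (L - μ)) * ‖g i - L • x i‖ ^ 2 - L / 2 * ‖x i‖ ^ 2) := by
  unfold interpolationBound
  simp only [← real_inner_self_eq_norm_sq, inner_sub_left, inner_sub_right, inner_add_left,
    inner_add_right, real_inner_smul_left, real_inner_smul_right]
  rw [real_inner_comm (g i) y, real_inner_comm (x i) y, real_inner_comm (x i) (g i)]
  field_simp
  ring

section

variable {d : ℕ} {I : Type*} [Fintype I] {L μ : ℝ}
  (x g : I → EuclideanSpace ℝ (Fin d)) (f : I → ℝ)

lemma vT_eq_sum_interpolationBound_sub (hL : L ≠ 0) (hLμ : L - μ ≠ 0)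
    (y : EuclideanSpace ℝ (Fin d)) {α : I → ℝ} (hα : ∑ i, α i = 1) :
    vT L μ x g f y α
      = ∑ i, α i * interpolationBound L μ x g f i y
        - ‖μ • y + ∑ i, α i • (g i - μ • x i)‖ ^ 2 / (2 * (L - μ)) := by
  set H := ∑ i, α i • (g i - μ • x i)
  have hsum : ∑ i, α i * interpolationBound L μ x g f i y
      = μ * L / (2 * (L - μ)) * ‖y‖ ^ 2 + L / (L - μ) * ⟪y, H⟫
        + ∑ i, α i * (f i + 1 / (2 * (L - μ)) * ‖g i - L • x i‖ ^ 2 - L / 2 * ‖x i‖ ^ 2) := by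
    simp only [interpolationBound_eq hL hLμ x g f, mul_add, Finset.sum_add_distrib,
      ← Finset.sum_mul, hα, one_mul, H, inner_sum, real_inner_smul_right, Finset.mul_sum]
    congr 2
    exact Finset.sum_congr rfl fun i _ => by ring
  rw [hsum, vT]
  simp only [← real_inner_self_eq_norm_sq, inner_sub_left, inner_sub_right, inner_add_left,
    inner_add_right, real_inner_smul_left, real_inner_smul_right]
  rw [real_inner_comm H y]
  field_simp
  ring

lemma vT_single [DecidableEq I] (hLμ : L - μ ≠ 0) (y : EuclideanSpace ℝ (Fin d)) (j : I) :
    vT L μ x g f y (Pi.single j 1) = f j + ⟪g j, y - x j⟫ + μ / 2 * ‖y - x j‖ ^ 2 := by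
  simp only [vT, Pi.single_apply, ite_smul, ite_mul, one_smul, zero_smul, one_mul, zero_mul,
    Finset.sum_ite_eq', Finset.mem_univ, if_true]
  simp only [← real_inner_self_eq_norm_sq, inner_sub_left, inner_sub_right,
    real_inner_smul_left, real_inner_smul_right]
  rw [real_inner_comm (g j) y, real_inner_comm (x j) y, real_inner_comm (x j) (g j)]
  field_simp
  ring

lemma bddAbove_vT_image_stdSimplex (y : EuclideanSpace ℝ (Fin d)) :
    BddAbove (vT L μ x g f y '' stdSimplex ℝ I) :=
  (isCompact_stdSimplex ℝ I).bddAbove_image (by unfold vT; fun_prop)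

lemma vT_le_VT (y : EuclideanSpace ℝ (Fin d)) {α : I → ℝ} (hα : α ∈ stdSimplex ℝ I) :
    vT L μ x g f y α ≤ VT L μ x g f y :=
  le_csSup (bddAbove_vT_image_stdSimplex x g f y) ⟨α, hα, rfl⟩

lemma VT_le [Nonempty I] (y : EuclideanSpace ℝ (Fin d)) {F : ℝ}
    (h : ∀ α ∈ stdSimplex ℝ I, vT L μ x g f y α ≤ F) : VT L μ x g f y ≤ F :=
  csSup_le (Set.nonempty_coe_sort.1 inferInstance |>.image _) (Set.forall_mem_image.2 h)

lemma le_VT [DecidableEq I] (hLμ : L - μ ≠ 0) (y : EuclideanSpace ℝ (Fin d)) (j : I) :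
    f j + ⟪g j, y - x j⟫ + μ / 2 * ‖y - x j‖ ^ 2 ≤ VT L μ x g f y :=
  vT_single x g f hLμ y j ▸ vT_le_VT x g f y (single_mem_stdSimplex ℝ j)

lemma VT_le_of_interpolationBound_le [Nonempty I] (hL : L ≠ 0) (hμL : μ < L)
    {u : EuclideanSpace ℝ (Fin d)} {F : ℝ} (h : ∀ i, interpolationBound L μ x g f i u ≤ F) :
    VT L μ x g f u ≤ F := by
  have hLμ : 0 < L - μ := sub_pos.2 hμL
  refine VT_le x g f u fun α ⟨hα0, hα1⟩ => ?_
  calc vT L μ x g f u α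
      = ∑ i, α i * interpolationBound L μ x g f i u
        - ‖μ • u + ∑ i, α i • (g i - μ • x i)‖ ^ 2 / (2 * (L - μ)) :=
        vT_eq_sum_interpolationBound_sub x g f hL hLμ.ne' u hα1
    _ ≤ ∑ i, α i * interpolationBound L μ x g f i u := sub_le_self _ (by positivity)
    _ ≤ ∑ i, α i * F := Finset.sum_le_sum fun i _ => mul_le_mul_of_nonneg_left (h i) (hα0 i)
    _ = F := by rw [← Finset.sum_mul, hα1, one_mul]

end

/-- `I*_N` is modelled as `Option (Fin (N + 1))`: `none` plays the role of `*` and `Fin.last N`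
that of `N`. -/
theorem stmt9_general {d N : ℕ} {L μ : ℝ} (hL : 0 < L) (hμ : 0 ≤ μ) (hμL : μ < L)
    (x g : Option (Fin (N + 1)) → EuclideanSpace ℝ (Fin d)) (f : Option (Fin (N + 1)) → ℝ)
    (hgstar : g none = 0)
    (hinterp : ∀ j : Option (Fin (N + 1)),
      1 / (2 * L) * ‖g j‖ ^ 2 + μ * L / (2 * (L - μ)) * ‖x none - x j + (1 / L) • g j‖ ^ 2
        ≤ f none - f j - ⟪g j, x none - x j⟫)
    (horth : ∀ i : Fin (N + 1), (i : ℕ) < N →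
      ⟪g (some (Fin.last N)), g (some i) - μ • x (some i)⟫ = 0)
    (horthx : ⟪g (some (Fin.last N)), x (some (Fin.last N))⟫ = 0) :
    (∀ y, f none ≤ VT L μ x g f y) ∧
    VT L μ x g f (x none) = f none ∧
    ∀ y ∈ Submodule.span ℝ
        ((fun i : Fin (N + 1) => g (some i) - μ • x (some i)) ''
          {i : Fin (N + 1) | (i : ℕ) < N}),
      (f (some (Fin.last N)) + μ / 2 * ‖y - x (some (Fin.last N))‖ ^ 2 ≤ VT L μ x g f y ∧
        f (some (Fin.last N)) ≤ f (some (Fin.last N)) + μ / 2 * ‖y - x (some (Fin.last N))‖ ^ 2) ∧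
      f (some (Fin.last N)) - f none ≤ VT L μ x g f y - f none := by
  have hsupport := le_VT x g f (sub_pos.2 hμL).ne'
  have hquad : ∀ y j, 0 ≤ μ / 2 * ‖y - x j‖ ^ 2 := fun _ _ => by positivity
  have hmin : ∀ y, f none ≤ VT L μ x g f y := fun y => by
    have := hsupport y none
    rw [hgstar, inner_zero_left, add_zero] at this
    linarith [hquad y none]
  have hval : VT L μ x g f (x none) = f none :=
    le_antisymm (VT_le_of_interpolationBound_le x g f hL.ne' hμL fun j => by
      unfold interpolationBound; linarith [hinterp j]) (hmin _)
  refine ⟨hmin, hval, fun y hy => ?_⟩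
  have hperp : y ∈ (ℝ ∙ g (some (Fin.last N)))ᗮ := by
    refine Submodule.span_le.2 ?_ hy
    rintro _ ⟨i, hi, rfl⟩
    exact Submodule.mem_orthogonal_singleton_iff_inner_right.2 (horth i hi)
  have hlast := hsupport y (some (Fin.last N))
  rw [inner_sub_right, Submodule.mem_orthogonal_singleton_iff_inner_right.1 hperp, horthx,
    sub_zero, add_zero] at hlast
  have hfN := le_add_of_nonneg_right (a := f (some (Fin.last N))) (hquad y (some (Fin.last N)))
  exact ⟨⟨hlast, hfN⟩, sub_le_sub_right (hfN.trans hlast) _⟩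

/-- With index set `I*_N = {0, …, N, *}` (modelled as `Option (Fin (N+1))`, where `none`
plays the role of `*` and `Fin.last N` the role of `N`): under hypotheses (i)–(iv),
`x_*` globally minimizes `V_T` with value `f_*`, and on the span of
`{g_0 − μx_0, …, g_{N−1} − μx_{N−1}}` one has
`V_T(y) ≥ f_N + (μ/2)‖y − x_N‖² ≥ f_N`, hence `V_T(y) − f_* ≥ f_N − f_*`. -/
theorem stmt9 {d N : ℕ} (hN : 1 ≤ N) {L μ : ℝ} (hL : 0 < L) (hμ : 0 ≤ μ) (hμL : μ < L)
    (x g : Option (Fin (N + 1)) → EuclideanSpace ℝ (Fin d)) (f : Option (Fin (N + 1)) → ℝ)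
    (hx0 : x (some 0) = 0) (hgstar : g none = 0)
    (hinterp : ∀ j : Option (Fin (N + 1)),
      1 / (2 * L) * ‖g j‖ ^ 2 + μ * L / (2 * (L - μ)) * ‖x none - x j + (1 / L) • g j‖ ^ 2
        ≤ f none - f j - ⟪g j, x none - x j⟫)
    (horth : ∀ i : Fin (N + 1), (i : ℕ) < N →
      ⟪g (some (Fin.last N)), g (some i) - μ • x (some i)⟫ = 0)
    (horthx : ⟪g (some (Fin.last N)), x (some (Fin.last N))⟫ = 0) :
    (∀ y, f none ≤ VT L μ x g f y) ∧
    VT L μ x g f (x none) = f none ∧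
    ∀ y ∈ Submodule.span ℝ
        ((fun i : Fin (N + 1) => g (some i) - μ • x (some i)) ''
          {i : Fin (N + 1) | (i : ℕ) < N}),
      (f (some (Fin.last N)) + μ / 2 * ‖y - x (some (Fin.last N))‖ ^ 2 ≤ VT L μ x g f y ∧
        f (some (Fin.last N)) ≤ f (some (Fin.last N)) + μ / 2 * ‖y - x (some (Fin.last N))‖ ^ 2) ∧
      f (some (Fin.last N)) - f none ≤ VT L μ x g f y - f none :=
  stmt9_general hL hμ hμL x g f hgstar hinterp horth horthx
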